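/- arXiv:2411.11781 — 6 statements merged into one kernel-verified Lean document; each statement's English description precedes it below -/
import Mathlib

section
/- Let G = (V, E) be a weighted cluster graph at scale s satisfying the size invariant and the blocked-edge invariant. Then G has diameter at most 2: for any two distinct vertices u, v of G, either {u,v} ∈ E or there exists a vertex x with {u,x} ∈ E and {x,v} ∈ E. -/
/-- **Diameter at most 2.** A weighted cluster graph at scale `s` satisfying the size
invariant and the blocked-edge invariant (every vertex is incident to a blocked edge,
or the graph has exactly one vertex) has diameter at most 2: any two distinct vertices
are adjacent or share a common neighbor. -/
theorem cluster_graph_diameter_le_two {V : Type*} [Fintype V] (G : SimpleGraph V)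
    (s : ℕ) (hs : 0 < s) (w : V → ℕ) (hw : ∀ v, 1 ≤ w v)
    (hsize : ∑ v, w v ≤ 2 * s)
    (hblocked : (∀ v : V, ∃ x : V, G.Adj v x ∧ s < w v + w x) ∨ Fintype.card V = 1) :
    ∀ u v : V, u ≠ v → G.Adj u v ∨ ∃ x : V, G.Adj u x ∧ G.Adj x v := by
  classical
  intro u v huv
  rcases hblocked with hb | hcard
  · obtain ⟨a, hua, hwa⟩ := hb u
    obtain ⟨b, hvb, hwb⟩ := hb v
    by_cases hav : a = v
    · left; exact hav ▸ hua
    by_cases hbu : b = u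
    · left; exact G.adj_symm (hbu ▸ hvb)
    by_cases hab : a = b
    · right; exact ⟨a, hua, hab ▸ G.adj_symm hvb⟩
    · exfalso
      have hdistsum : w u + w a + w v + w b ≤ ∑ x, w x := by
        have hsub : ({u, a, v, b} : Finset V) ⊆ Finset.univ := Finset.subset_univ _
        have h1 : u ≠ a := hua.ne
        have h2 : u ≠ b := fun h => hbu h.symm
        have h3 : v ≠ b := hvb.ne
        calc w u + w a + w v + w b = ∑ x ∈ ({u, a, v, b} : Finset V), w x := by
              rw [Finset.sum_insert (by simp [h1, huv, h2]),
                Finset.sum_insert (by simp [hav, hab]),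
                Finset.sum_insert (by simp [h3]), Finset.sum_singleton]
              ring
          _ ≤ ∑ x, w x := Finset.sum_le_sum_of_subset hsub
      omega
  · exact absurd (Fintype.card_le_one_iff.mp hcard.le u v) huv
end

section
/- Let G = (V, E) be a weighted cluster graph at scale s with V nonempty, satisfying the size invariant and the blocked-edge invariant. Then G has a center: there exists a vertex u ∈ V such that for every vertex v ≠ u, {u,v} ∈ E and w(u) + w(v) > s (u is joined to every other vertex by a blocked edge). -/
lemma two_blocked_edges_meet {V : Type*} [Fintype V] [DecidableEq V] (w : V → ℕ) (s : ℕ)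
    (hsize : ∑ v, w v ≤ 2 * s) {a b c d : V}
    (hab : a ≠ b) (hcd : c ≠ d) (hac : a ≠ c) (had : a ≠ d) (hbc : b ≠ c) (hbd : b ≠ d)
    (h1 : s < w a + w b) (h2 : s < w c + w d) : False := by
  have hsub : ({a, b, c, d} : Finset V) ⊆ Finset.univ := Finset.subset_univ _
  have hle := Finset.sum_le_sum_of_subset (f := w) hsub
  have hsum : ∑ x ∈ ({a, b, c, d} : Finset V), w x = w a + w b + w c + w d := by
    rw [Finset.sum_insert (by simp [hab, hac, had]),
        Finset.sum_insert (by simp [hbc, hbd]),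
        Finset.sum_insert (by simp [hcd]), Finset.sum_singleton]
    ring
  omega

/-- **Existence of a center.** A nonempty weighted cluster graph at scale `s`
satisfying the size invariant and the blocked-edge invariant has a center: a vertex
joined to every other vertex by a blocked edge. -/
theorem cluster_graph_has_center {V : Type*} [Fintype V] [Nonempty V]
    (G : SimpleGraph V) (s : ℕ) (hs : 0 < s) (w : V → ℕ) (hw : ∀ v, 1 ≤ w v)
    (hsize : ∑ v, w v ≤ 2 * s)
    (hblocked : (∀ v : V, ∃ x : V, G.Adj v x ∧ s < w v + w x) ∨ Fintype.card V = 1) :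
    ∃ u : V, ∀ v : V, v ≠ u → G.Adj u v ∧ s < w u + w v := by
  classical
  rcases hblocked with h | hcard
  · obtain ⟨u₀⟩ := ‹Nonempty V›
    obtain ⟨a, hadj, hb⟩ := h u₀
    have hua : u₀ ≠ a := G.ne_of_adj hadj
    by_cases hu : ∀ v, v ≠ u₀ → v ≠ a → G.Adj u₀ v ∧ s < w u₀ + w v
    · refine ⟨u₀, fun v hv => ?_⟩
      by_cases hva : v = a
      · subst hva; exact ⟨hadj, hb⟩
      · exact hu v hv hva
    · push_neg at hu
      obtain ⟨v, hvu, hva, hnot⟩ := hu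
      obtain ⟨x, hvx, hbx⟩ := h v
      have hvx' : v ≠ x := G.ne_of_adj hvx
      have hx : x = u₀ ∨ x = a := by
        by_contra hxx
        push_neg at hxx
        exact two_blocked_edges_meet w s hsize hvx' hua hvu hva hxx.1 hxx.2 hbx hb
      have hxa : x = a := by
        rcases hx with h1 | h1
        · rw [h1] at hvx hbx
          exact absurd (hnot hvx.symm) (by omega)
        · exact h1
      rw [hxa] at hvx hbx
      -- a is the center
      refine ⟨a, fun v' hv' => ?_⟩
      by_cases hv'u : v' = u₀
      · subst hv'u; exact ⟨hadj.symm, by omega⟩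
      · obtain ⟨x', hadj', hb'⟩ := h v'
        have hv'x' : v' ≠ x' := G.ne_of_adj hadj'
        have hx' : x' = u₀ ∨ x' = a := by
          by_contra hxx
          push_neg at hxx
          exact two_blocked_edges_meet w s hsize hv'x' hua hv'u hv' hxx.1 hxx.2 hb' hb
        rcases hx' with h1 | h1
        · rw [h1] at hadj' hb'
          by_cases hvv : v' = v
          · subst hvv; exact ⟨hvx.symm, by omega⟩
          · exact (two_blocked_edges_meet w s hsize hv'u hva hvv hv'
              (Ne.symm hvu) hua hb' hbx).elim
        · rw [h1] at hadj' hb'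
          exact ⟨hadj'.symm, by omega⟩
  · obtain ⟨u⟩ := ‹Nonempty V›
    refine ⟨u, fun v hv => absurd ?_ hv⟩
    have : Subsingleton V := Fintype.card_le_one_iff_subsingleton.mp (le_of_eq hcard)
    exact Subsingleton.elim v u
end

section
/- Let G = (V, E) be a weighted cluster graph at scale s satisfying the size invariant, with |V| = k ≥ 4 vertices, and suppose u ∈ V is a center, i.e., for every vertex v ≠ u, w(u) + w(v) > s. Then (k − 2) · w(u) > (k − 3) · s, and consequently 2 · w(u) > s (the center's weight exceeds s/2). -/
/-- **Weight bound for the center.** In a weighted cluster graph at scale `s`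
satisfying the size invariant with `k ≥ 4` vertices, a center vertex `u` (with
`w u + w v > s` for every other vertex `v`) satisfies
`(k - 2) * w u > (k - 3) * s`, and consequently `2 * w u > s`. -/
theorem center_weight_bound {V : Type*} [Fintype V] (G : SimpleGraph V)
    (s : ℕ) (hs : 0 < s) (w : V → ℕ) (hw : ∀ v, 1 ≤ w v)
    (hsize : ∑ v, w v ≤ 2 * s)
    (k : ℕ) (hk : Fintype.card V = k) (hk4 : 4 ≤ k)
    (u : V) (hcenter : ∀ v : V, v ≠ u → s < w u + w v) :
    (k - 3) * s < (k - 2) * w u ∧ s < 2 * w u := by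
  classical
  have hcard : (Finset.univ.erase u).card = k - 1 := by
    rw [Finset.card_erase_of_mem (Finset.mem_univ u), Finset.card_univ, hk]
  have hne : (Finset.univ.erase u).Nonempty := by
    rw [← Finset.card_pos, hcard]; omega
  have hsum1 : ∑ _v ∈ Finset.univ.erase u, s < ∑ v ∈ Finset.univ.erase u, (w u + w v) := by
    refine Finset.sum_lt_sum_of_nonempty hne ?_
    intro v hv
    exact hcenter v (Finset.ne_of_mem_erase hv)
  rw [Finset.sum_const, hcard, smul_eq_mul] at hsum1
  have hsum2 : ∑ v ∈ Finset.univ.erase u, (w u + w v)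
      = (k - 1) * w u + ∑ v ∈ Finset.univ.erase u, w v := by
    rw [Finset.sum_add_distrib, Finset.sum_const, hcard, smul_eq_mul]
  have hsum3 : w u + ∑ v ∈ Finset.univ.erase u, w v = ∑ v, w v :=
    Finset.add_sum_erase _ _ (Finset.mem_univ u)
  have h1 : (k - 1) * s + w u < (k - 1) * w u + 2 * s := by
    calc (k - 1) * s + w u < (k - 1) * w u + ∑ v ∈ Finset.univ.erase u, w v + w u := by
          rw [hsum2] at hsum1; omega
      _ = (k - 1) * w u + ∑ v, w v := by omega
      _ ≤ (k - 1) * w u + 2 * s := by omega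
  have e1 : (k - 3) * s + 2 * s = (k - 1) * s := by
    rw [← add_mul]; congr 1; omega
  have e2 : (k - 2) * w u + 1 * w u = (k - 1) * w u := by
    rw [← add_mul]; congr 1; omega
  have hA : (k - 3) * s < (k - 2) * w u := by
    rw [← e1, ← e2] at h1; linarith
  refine ⟨hA, ?_⟩
  have h2 : (k - 2) * s < (k - 2) * (2 * w u) := by
    calc (k - 2) * s ≤ (2 * (k - 3)) * s := Nat.mul_le_mul_right _ (by omega)
      _ = 2 * ((k - 3) * s) := by ring
      _ < 2 * ((k - 2) * w u) := Nat.mul_lt_mul_of_le_of_lt le_rfl hA two_pos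
      _ = (k - 2) * (2 * w u) := by ring
  exact Nat.lt_of_mul_lt_mul_left h2
end

section
/- Let G = (V, E) be a weighted cluster graph at scale s satisfying the size invariant, and suppose u ∈ V satisfies w(u) + w(v) > s for every vertex v ≠ u (u is a center joined to every satellite by a blocked pair). Then there is at most one unordered pair {a, b} of distinct vertices of V ∖ {u} with w(a) + w(b) > s; in particular, pushing down unblocked edges between satellites can cause at most one blocked edge to form between satellites. -/
/-- **At most one blocked pair among the satellites.** In a weighted cluster graph
at scale `s` satisfying the size invariant, if `u` is a center (so `w u + w v > s`
for every other vertex `v`), then there is at most one unordered pair of distinct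
vertices other than `u` whose weights sum to more than `s`. -/
theorem at_most_one_blocked_satellite_pair {V : Type*} [Fintype V]
    (G : SimpleGraph V) (s : ℕ) (hs : 0 < s) (w : V → ℕ) (hw : ∀ v, 1 ≤ w v)
    (hsize : ∑ v, w v ≤ 2 * s)
    (u : V) (hcenter : ∀ v : V, v ≠ u → s < w u + w v) :
    ∀ a b a' b' : V, a ≠ u → b ≠ u → a' ≠ u → b' ≠ u → a ≠ b → a' ≠ b' →
      s < w a + w b → s < w a' + w b' → ({a, b} : Set V) = {a', b'} := by
  classical
  intro a b a' b' ha hb ha' hb' hab ha'b' h1 h2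
  by_contra hne
  -- there is c ∈ {a',b'} not in {a,b}
  have hc : ∃ c, (c = a' ∨ c = b') ∧ c ≠ a ∧ c ≠ b := by
    by_contra hcon
    push_neg at hcon
    have h3 := hcon a' (Or.inl rfl)
    have h4 := hcon b' (Or.inr rfl)
    apply hne
    rcases Classical.em (a' = a) with h | h
    · rcases Classical.em (b' = a) with h' | h'
      · exact absurd (h.trans h'.symm) ha'b'
      · have : b' = b := by rcases h4 h' with h5 | h5 <;> tauto
        subst h; subst this; ext x; simp [or_comm]
    · have ha'b : a' = b := by rcases h3 h with h5 | h5 <;> tauto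
      have hb'a : b' = a := by
        rcases Classical.em (b' = a) with h' | h'
        · exact h'
        · have : b' = b := by rcases h4 h' with h5 | h5 <;> tauto
          exact absurd (ha'b.trans this.symm) ha'b'
      subst ha'b; subst hb'a; ext x; simp [or_comm]
  obtain ⟨c, hcmem, hca, hcb⟩ := hc
  have hcu : c ≠ u := by rcases hcmem with rfl | rfl <;> assumption
  have hsum : w u + (w a + (w b + w c)) ≤ ∑ v, w v := by
    have hsub : ∑ v ∈ ({u, a, b, c} : Finset V), w v ≤ ∑ v, w v :=
      Finset.sum_le_sum_of_subset (Finset.subset_univ _)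
    have heq : ∑ v ∈ ({u, a, b, c} : Finset V), w v = w u + (w a + (w b + w c)) := by
      rw [Finset.sum_insert (by simp [Ne.symm ha, Ne.symm hb, Ne.symm hcu]),
          Finset.sum_insert (by simp [hab, Ne.symm hca]),
          Finset.sum_insert (by simp [Ne.symm hcb]), Finset.sum_singleton]
    omega
  have huc := hcenter c hcu
  omega
end

section
/- Let s be a positive integer and let F (the center fragments) and S (the satellites) be disjoint finite sets with a weight function w assigning positive integers, F nonempty, and set W = ∑_{f∈F} w(f). Assume W + ∑_{v∈S} w(v) ≤ 2s (the size invariant) and W + w(v) > s for every v ∈ S (before the center split, every satellite was joined to the center by a blocked edge). Then at most one unordered pair {a, b} of distinct satellites in S satisfies w(a) + w(b) > s; that is, after the center of a star cluster graph is split into the fragments F, at most one blocked edge can form between the satellites by pushing down unblocked edges between them. -/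
/-- **At most one blocked satellite pair after a center split.** Let `s > 0`, and let
`F` (the center fragments, nonempty) and `S` (the satellites) be disjoint finite sets
with positive integer weights. If the total weight is at most `2 * s` and the total
fragment weight plus each satellite weight exceeds `s`, then at most one unordered
pair of distinct satellites has weights summing to more than `s`. -/
theorem at_most_one_blocked_pair_after_center_split {α : Type*} [DecidableEq α]
    (s : ℕ) (hs : 0 < s) (F S : Finset α) (hFS : Disjoint F S) (hF : F.Nonempty)
    (w : α → ℕ) (hw : ∀ x ∈ F ∪ S, 1 ≤ w x)
    (hsize : (∑ x ∈ F, w x) + (∑ x ∈ S, w x) ≤ 2 * s)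
    (hblock : ∀ v ∈ S, s < (∑ x ∈ F, w x) + w v) :
    ∀ a ∈ S, ∀ b ∈ S, ∀ a' ∈ S, ∀ b' ∈ S, a ≠ b → a' ≠ b' →
      s < w a + w b → s < w a' + w b' → ({a, b} : Set α) = {a', b'} := by
  intro a ha b hb a' ha' b' hb' hab hab' h1 h2
  by_contra hne
  -- There is c ∈ {a', b'} with c ∉ {a, b}
  obtain ⟨c, hcS, hca, hcb⟩ : ∃ c, c ∈ S ∧ c ≠ a ∧ c ≠ b := by
    by_cases h3 : a' = a ∨ a' = b
    · by_cases h4 : b' = a ∨ b' = b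
      · exfalso; apply hne
        rcases h3 with h3 | h3 <;> rcases h4 with h4 | h4 <;> subst h3 <;> subst h4 <;>
          simp_all [Set.pair_comm]
      · push_neg at h4; exact ⟨b', hb', h4.1, h4.2⟩
    · push_neg at h3; exact ⟨a', ha', h3.1, h3.2⟩
  have hsub : ({a, b, c} : Finset α) ⊆ S := by
    intro x hx
    simp only [Finset.mem_insert, Finset.mem_singleton] at hx
    rcases hx with h | h | h <;> subst h <;> assumption
  have hsum : w a + w b + w c ≤ ∑ x ∈ S, w x := by
    have : ∑ x ∈ ({a, b, c} : Finset α), w x = w a + w b + w c := by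
      rw [Finset.sum_insert (by simp [hab, Ne.symm hca]),
        Finset.sum_insert (by simp [Ne.symm hcb]), Finset.sum_singleton]
      ring
    rw [← this]
    exact Finset.sum_le_sum_of_subset hsub
  have hc := hblock c hcS
  omega
end

section
/- Let G = (V, E) be a weighted cluster graph at scale s satisfying the size invariant, with |V| = k ≥ 4. Suppose C ∈ V is such that every vertex v ≠ C is adjacent to C, and there exist two distinct vertices v1, v2 ≠ C with w(C) + w(v1) > s and w(C) + w(v2) > s (at least two of the edges incident to C are blocked). Let S ≠ C be a vertex of minimum weight among V ∖ {C}. If S has a neighbor X in G with w(S) + w(X) > s (the smallest non-center cluster is incident to a blocked edge), then w(C) + w(v) > s for every vertex v ≠ C; in particular, every vertex of G is incident to a blocked edge. -/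
/-- **Smallest cluster blocked implies all blocked.** In a weighted cluster graph at
scale `s` satisfying the size invariant with at least 4 vertices, suppose every
vertex other than `C` is adjacent to `C` and at least two of the edges incident to
`C` are blocked. If the smallest vertex `S ≠ C` has a neighbor `X` with
`w S + w X > s`, then `w C + w v > s` for every vertex `v ≠ C`; in particular every
vertex is incident to a blocked edge. -/
theorem smallest_blocked_implies_all_blocked {V : Type*} [Fintype V]
    (G : SimpleGraph V) (s : ℕ) (hs : 0 < s) (w : V → ℕ) (hw : ∀ v, 1 ≤ w v)
    (hsize : ∑ v, w v ≤ 2 * s) (hk4 : 4 ≤ Fintype.card V)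
    (C : V) (hstar : ∀ v : V, v ≠ C → G.Adj C v)
    (v1 v2 : V) (hv1 : v1 ≠ C) (hv2 : v2 ≠ C) (hv12 : v1 ≠ v2)
    (hb1 : s < w C + w v1) (hb2 : s < w C + w v2)
    (S : V) (hS : S ≠ C) (hSmin : ∀ v : V, v ≠ C → w S ≤ w v)
    (X : V) (hSX : G.Adj S X) (hblocked : s < w S + w X) :
    ∀ v : V, v ≠ C → s < w C + w v := by
  classical
  intro v hv
  have hvS := hSmin v hv
  have key : s < w C + w S := by
    by_contra h
    push_neg at h
    have hXC : X ≠ C := by rintro rfl; omega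
    have hSv1 : S ≠ v1 := by rintro rfl; omega
    have hSv2 : S ≠ v2 := by rintro rfl; omega
    have hSX' : S ≠ X := G.ne_of_adj hSX
    obtain ⟨u, huC, huS, huX, hbu⟩ : ∃ u, u ≠ C ∧ u ≠ S ∧ u ≠ X ∧ s < w C + w u := by
      by_cases hx : v1 = X
      · exact ⟨v2, hv2, hSv2.symm, by rw [← hx]; exact hv12.symm, hb2⟩
      · exact ⟨v1, hv1, hSv1.symm, hx, hb1⟩
    have hsub : ({C, S, X, u} : Finset V).sum w ≤ ∑ v, w v :=
      Finset.sum_le_sum_of_subset (Finset.subset_univ _)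
    have hd : ({C, S, X, u} : Finset V).sum w = w C + w S + w X + w u := by
      rw [Finset.sum_insert (by simp [hS.symm, hXC.symm, huC.symm, Ne.symm]),
        Finset.sum_insert (by simp [hSX', huS, Ne.symm]),
        Finset.sum_insert (by simp [huX, Ne.symm]), Finset.sum_singleton]
      ring
    omega
  omega
end
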